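/- arXiv:1707.01240 — 3 statements merged into one kernel-verified Lean document; each statement's English description precedes it below -/
import Mathlib

section
/- Let m > 0, p > 1 with γ := m(p-1)-1 > 0, and let f ∈ C¹([0,1]) with f(0)=f(1)=0. Consider the c = 0 equation of trajectories dZ/dX = -(Z^p + m X^{γ/(p-1)-1} f(X)) / ((p-1) X Z^{p-1}) for 0 < X < 1, Z > 0. For any k ∈ ℝ, the function Z(X) = X^{-1/(p-1)} [k - (mp/(p-1)) ∫₀^X u^{m-1} f(u) du]^{1/p} is a solution on any interval where the bracket is positive. -/
open Real Set intervalIntegral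

/-!
Writing `Z(X) = X^{-1/(p-1)} B(X)^{1/p}`, the trajectory equation becomes the linear equation
`B' = -(mp/(p-1)) X^{m-1} f` for `B = X^{p/(p-1)} Z^p`, which the fundamental theorem of
calculus integrates directly.
-/

lemma hasDerivAt_integral_rpow_mul {m a X : ℝ} {f : ℝ → ℝ} (hm : 0 < m)
    (hf : ContinuousOn f (Icc 0 a)) (hX : X ∈ Ioo 0 a) :
    HasDerivAt (fun Y => ∫ u in (0:ℝ)..Y, u ^ (m - 1) * f u) (X ^ (m - 1) * f X) X := by
  have hcont : ContinuousOn (fun u : ℝ => u ^ (m - 1) * f u) (Ioo 0 a) :=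
    fun y hy => ((continuousAt_rpow_const y (m - 1) (Or.inl hy.1.ne')).continuousWithinAt).mul
      (hf.mono Ioo_subset_Icc_self y hy)
  have hint : IntervalIntegrable (fun u : ℝ => u ^ (m - 1) * f u) MeasureTheory.volume 0 X := by
    refine (intervalIntegrable_rpow' (by linarith : (-1:ℝ) < m - 1)).mul_continuousOn
      (hf.mono ?_)
    rw [uIcc_of_le hX.1.le]
    exact Icc_subset_Icc le_rfl hX.2.le
  exact integral_hasDerivAt_right hint
    (hcont.stronglyMeasurableAtFilter isOpen_Ioo X hX) (hcont.continuousAt (Ioo_mem_nhds hX.1 hX.2))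

lemma hasDerivAt_rpow_mul_rpow {p X B' : ℝ} {B Z : ℝ → ℝ} (hp : 1 < p) (hX : 0 < X)
    (hB : HasDerivAt B B' X) (hBX : 0 < B X)
    (hZ : ∀ Y, Z Y = Y ^ (-(1 / (p - 1))) * B Y ^ (1 / p)) :
    HasDerivAt Z
      (-(Z X ^ p - (p - 1) / p * X ^ (-(1 / (p - 1))) * B') / ((p - 1) * X * Z X ^ (p - 1)))
      X := by
  have hp1 : p - 1 ≠ 0 := by linarith
  have hp0 : p ≠ 0 := by linarith
  rw [show Z = _ from funext hZ]
  refine ((hasDerivAt_rpow_const (p := -(1 / (p - 1))) (Or.inl hX.ne')).mul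
    (hB.rpow_const (p := 1 / p) (Or.inl hBX.ne'))).congr_deriv ?_
  set t := X ^ (-(1 / (p - 1))) with ht
  set s := B X ^ (1 / p) with hs
  have htpos : 0 < t := rpow_pos_of_pos hX _
  have hspos : 0 < s := rpow_pos_of_pos hBX _
  have hZp : (t * s) ^ p = t / X * B X := by
    rw [mul_rpow htpos.le hspos.le, hs, ← rpow_mul hBX.le, one_div_mul_cancel hp0, rpow_one, ht,
      ← rpow_mul hX.le, show -(1 / (p - 1)) * p = -(1 / (p - 1)) - 1 by field_simp; ring,
      rpow_sub hX, rpow_one]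
  have hZp1 : (t * s) ^ (p - 1) = B X / s / X := by
    rw [mul_rpow htpos.le hspos.le, ht, hs, ← rpow_mul hX.le, ← rpow_mul hBX.le,
      show -(1 / (p - 1)) * (p - 1) = -1 by field_simp,
      show 1 / p * (p - 1) = 1 - 1 / p by field_simp, rpow_neg_one, rpow_sub hBX, rpow_one]
    ring
  rw [hZp, hZp1, rpow_sub hX, rpow_one, rpow_sub hBX, rpow_one]
  field_simp
  ring

lemma rpow_gamma_div_sub_one {m p γ X : ℝ} (hp : 1 < p) (hγ : γ = m * (p - 1) - 1) (hX : 0 < X) :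
    X ^ (γ / (p - 1) - 1) = X ^ (-(1 / (p - 1))) * X ^ (m - 1) := by
  have hp1 : p - 1 ≠ 0 := by linarith
  rw [← rpow_add hX, hγ]
  congr 1
  field_simp
  ring

theorem stmt_4_general (m p γ k : ℝ) (hm : 0 < m) (hp : 1 < p)
    (hγ : γ = m * (p - 1) - 1)
    (f : ℝ → ℝ) (hf : ContDiffOn ℝ 1 f (Icc 0 1))
    (Z : ℝ → ℝ)
    (hZ : ∀ X, Z X = X ^ (-(1 / (p - 1))) *
      (k - (m * p / (p - 1)) * ∫ u in (0:ℝ)..X, u ^ (m - 1) * f u) ^ (1 / p)) :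
    ∀ X ∈ Ioo (0:ℝ) 1,
      0 < k - (m * p / (p - 1)) * (∫ u in (0:ℝ)..X, u ^ (m - 1) * f u) →
      HasDerivAt Z
        (-(Z X ^ p + m * X ^ (γ / (p - 1) - 1) * f X) / ((p - 1) * X * Z X ^ (p - 1)))
        X := by
  intro X hX hpos
  have hB := ((hasDerivAt_integral_rpow_mul hm hf.continuousOn hX).const_mul
    (m * p / (p - 1))).const_sub k
  convert hasDerivAt_rpow_mul_rpow hp hX.1 hB hpos hZ using 3
  have hp1 : p - 1 ≠ 0 := by linarith
  have hp0 : p ≠ 0 := by linarith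
  rw [rpow_gamma_div_sub_one hp hγ hX.1]
  field_simp
  ring

/-- Explicit first integral of the zero-speed trajectory equation:
`Z(X) = X^{-1/(p-1)} [k - (mp/(p-1)) ∫₀^X u^{m-1} f(u) du]^{1/p}` solves
`dZ/dX = -(Z^p + m X^{γ/(p-1)-1} f(X)) / ((p-1) X Z^{p-1})` wherever the bracket is
positive. -/
theorem stmt_4 (m p γ k : ℝ) (hm : 0 < m) (hp : 1 < p)
    (hγ : γ = m * (p - 1) - 1) (hγpos : 0 < γ)
    (f : ℝ → ℝ) (hf : ContDiffOn ℝ 1 f (Icc 0 1)) (hf0 : f 0 = 0) (hf1 : f 1 = 0)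
    (Z : ℝ → ℝ)
    (hZ : ∀ X, Z X = X ^ (-(1 / (p - 1))) *
      (k - (m * p / (p - 1)) * ∫ u in (0:ℝ)..X, u ^ (m - 1) * f u) ^ (1 / p)) :
    ∀ X ∈ Ioo (0:ℝ) 1,
      0 < k - (m * p / (p - 1)) * (∫ u in (0:ℝ)..X, u ^ (m - 1) * f u) →
      HasDerivAt Z
        (-(Z X ^ p + m * X ^ (γ / (p - 1) - 1) * f X) / ((p - 1) * X * Z X ^ (p - 1)))
        X :=
  stmt_4_general m p γ k hm hp hγ f hf Z hZ
end

section
/- Let m > 0, p > 1 with γ := m(p-1) - 1 > 0, c* > 0, and suppose Z : (0,δ) → (0,∞) is continuous with Z(X) → c*^{1/(p-1)} as X → 0⁺. Let X : (ξ₁, ξ₀) → (0, δ) be a C¹ decreasing solution of -m dX/dξ = X^{1-γ/(p-1)} Z(X) with X(ξ) → 0 as ξ → ξ₀⁻. Then ξ₀ is finite whenever ξ₁ is finite and moreover X(ξ)^{γ/(p-1)} / (ξ₀ - ξ) converges to the positive constant γ c*^{1/(p-1)} / (m(p-1)) as ξ → ξ₀⁻. In particular the profile vanishes in finite 'time' ξ₀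 and obeys the Darcy-type behaviour φ(ξ)^{γ/(p-1)} ∼ const·(ξ₀ - ξ). -/
open Real Set Filter Topology

/-!
Put `α = γ/(p-1)`. The ODE is chosen so that `W = X ^ α` has derivative `-(α/m) Z(X)`,
which tends to `-(α/m) c*^{1/(p-1)}` at the free boundary, while `W → 0` there because `α > 0`.
L'Hôpital's rule for `W(ξ) / (ξ₀ - ξ)` then gives the Darcy law.
-/

theorem HasDerivAt.rpow_const_of_eq_rpow_one_sub_mul {f : ℝ → ℝ} {x α v : ℝ}
    (hf : HasDerivAt f (f x ^ (1 - α) * v) x) (hx : 0 < f x) :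
    HasDerivAt (fun t => f t ^ α) (α * v) x := by
  convert hf.rpow_const (p := α) (Or.inl hx.ne') using 1
  have hcancel : f x ^ (1 - α) * f x ^ (α - 1) = 1 := by
    rw [← rpow_add hx]
    norm_num
  linear_combination (-(α * v)) * hcancel

theorem tendsto_div_sub_nhdsLT_of_hasDerivAt {f f' : ℝ → ℝ} {a b L : ℝ} (hab : a < b)
    (hf : ∀ x ∈ Ioo a b, HasDerivAt f (f' x) x) (hfb : Tendsto f (𝓝[<] b) (𝓝 0))
    (hf' : Tendsto f' (𝓝[<] b) (𝓝 (-L))) :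
    Tendsto (fun x => f x / (b - x)) (𝓝[<] b) (𝓝 L) := by
  have hsub : ∀ x ∈ Ioo a b, HasDerivAt (fun x => b - x) (-1) x := fun x _ => by
    simpa using (hasDerivAt_id x).const_sub b
  have hsub_lim : Tendsto (fun x => b - x) (𝓝[<] b) (𝓝 0) :=
    tendsto_nhdsWithin_of_tendsto_nhds
      ((continuous_const.sub continuous_id).tendsto' b 0 (sub_self b))
  refine HasDerivAt.lhopital_zero_left_on_Ioo hab hf hsub (fun _ _ => by norm_num)
    hfb hsub_lim ?_
  simpa [div_neg] using hf'.neg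

theorem stmt_8_general (m p γ cstar δ ξ₀ ξ₁ : ℝ) (hp : 1 < p)
    (hγpos : 0 < γ)
    (hξ : ξ₁ < ξ₀)
    (Z : ℝ → ℝ)
    (hZlim : Tendsto Z (nhdsWithin 0 (Ioi 0)) (nhds (cstar ^ (1 / (p - 1)))))
    (X : ℝ → ℝ) (hXrange : ∀ ξ ∈ Ioo ξ₁ ξ₀, X ξ ∈ Ioo (0:ℝ) δ)
    (hXode : ∀ ξ ∈ Ioo ξ₁ ξ₀,
      HasDerivAt X (-(X ξ ^ (1 - γ / (p - 1)) * Z (X ξ)) / m) ξ)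
    (hXlim : Tendsto X (nhdsWithin ξ₀ (Iio ξ₀)) (nhds 0)) :
    Tendsto (fun ξ => X ξ ^ (γ / (p - 1)) / (ξ₀ - ξ)) (nhdsWithin ξ₀ (Iio ξ₀))
      (nhds (γ * cstar ^ (1 / (p - 1)) / (m * (p - 1)))) := by
  set α := γ / (p - 1)
  have hα : 0 < α := div_pos hγpos (sub_pos.mpr hp)
  have hW : ∀ ξ ∈ Ioo ξ₁ ξ₀, HasDerivAt (fun t => X t ^ α) (α * (-Z (X ξ) / m)) ξ :=
    fun ξ hξ' => HasDerivAt.rpow_const_of_eq_rpow_one_sub_mul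
      (by convert hXode ξ hξ' using 1; ring) (hXrange ξ hξ').1
  have hW_lim : Tendsto (fun t => X t ^ α) (𝓝[<] ξ₀) (𝓝 0) := by
    simpa [zero_rpow hα.ne'] using hXlim.rpow_const (Or.inr hα.le)
  have hX_pos : ∀ᶠ ξ in 𝓝[<] ξ₀, X ξ ∈ Ioi 0 := by
    filter_upwards [Ioo_mem_nhdsLT hξ] with ξ hξ' using (hXrange ξ hξ').1
  have hZX : Tendsto (fun ξ => Z (X ξ)) (𝓝[<] ξ₀) (𝓝 (cstar ^ (1 / (p - 1)))) :=
    hZlim.comp (tendsto_nhdsWithin_iff.mpr ⟨hXlim, hX_pos⟩)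
  refine tendsto_div_sub_nhdsLT_of_hasDerivAt hξ hW hW_lim ?_
  convert (hZX.neg.div_const m).const_mul α using 2
  rw [mul_comm m, ← div_div]
  ring

/-- Free-boundary (Darcy law) behaviour of finite travelling waves in the slow
diffusion range `γ > 0`: if `Z → c*^{1/(p-1)} > 0` as `X → 0⁺` and the decreasing
profile `X(ξ)` solves `-m X' = X^{1-γ/(p-1)} Z(X)` with `X → 0` as `ξ → ξ₀⁻`, then
`X(ξ)^{γ/(p-1)}/(ξ₀ - ξ) → γ c*^{1/(p-1)}/(m(p-1))` as `ξ → ξ₀⁻`. -/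
theorem stmt_8 (m p γ cstar δ ξ₀ ξ₁ : ℝ) (hm : 0 < m) (hp : 1 < p)
    (hγ : γ = m * (p - 1) - 1) (hγpos : 0 < γ) (hcstar : 0 < cstar) (hδ : 0 < δ)
    (hξ : ξ₁ < ξ₀)
    (Z : ℝ → ℝ) (hZcont : ContinuousOn Z (Ioo 0 δ))
    (hZpos : ∀ s ∈ Ioo (0:ℝ) δ, 0 < Z s)
    (hZlim : Tendsto Z (nhdsWithin 0 (Ioi 0)) (nhds (cstar ^ (1 / (p - 1)))))
    (X : ℝ → ℝ) (hXrange : ∀ ξ ∈ Ioo ξ₁ ξ₀, X ξ ∈ Ioo (0:ℝ) δ)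
    (hXdec : StrictAntiOn X (Ioo ξ₁ ξ₀))
    (hXode : ∀ ξ ∈ Ioo ξ₁ ξ₀,
      HasDerivAt X (-(X ξ ^ (1 - γ / (p - 1)) * Z (X ξ)) / m) ξ)
    (hXlim : Tendsto X (nhdsWithin ξ₀ (Iio ξ₀)) (nhds 0)) :
    Tendsto (fun ξ => X ξ ^ (γ / (p - 1)) / (ξ₀ - ξ)) (nhdsWithin ξ₀ (Iio ξ₀))
      (nhds (γ * cstar ^ (1 / (p - 1)) / (m * (p - 1)))) :=
  stmt_8_general m p γ cstar δ ξ₀ ξ₁ hp hγpos hξ Z hZlim X hXrange hXode hXlim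
end

section
/- Let m > 0, p > 1, c > 0 and f ∈ C¹([0,1]) with f(0) = 0 and f'(0) < 0, γ := m(p-1)-1 > 0. Suppose Z : (0,δ) → (0,∞) is a solution of the equation of trajectories dZ/dX = (cZ - Z^p - m X^{γ/(p-1)-1} f(X)) / ((p-1) X Z^{p-1}) with Z(X) → 0 as X → 0⁺. Then, if Z(X)/X^{γ/(p-1)} converges as X → 0⁺, the limit must equal m f'(0)/c < 0, contradicting Z > 0; hence Z(X)/X^{γ/(p-1)} cannot converge as X → 0⁺, and in particular no positive trajectory approaches the origin O(0,0) with Z = o(X^{γ/(p-1)}) when f'(0) < 0. -/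
open Real Set Filter

/-- Local analysis near the origin for type C reactions (`f'(0) < 0`, `γ > 0`):
no positive trajectory of the equation of trajectories can approach `O(0,0)` with
`Z → 0` and `Z(X)/X^{γ/(p-1)}` convergent, since the limit would have to be
`m f'(0)/c < 0`, contradicting `Z > 0`. -/
theorem stmt_14 (m p γ c δ L : ℝ) (hm : 0 < m) (hp : 1 < p) (hc : 0 < c)
    (hγ : γ = m * (p - 1) - 1) (hγpos : 0 < γ) (hδ : 0 < δ) (hδ1 : δ ≤ 1)
    (f : ℝ → ℝ) (hf : ContDiffOn ℝ 1 f (Icc 0 1))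
    (hf0 : f 0 = 0) (hf'0 : deriv f 0 < 0)
    (Z : ℝ → ℝ) (hZpos : ∀ X ∈ Ioo (0:ℝ) δ, 0 < Z X)
    (hZode : ∀ X ∈ Ioo (0:ℝ) δ,
      HasDerivAt Z
        ((c * Z X - Z X ^ p - m * X ^ (γ / (p - 1) - 1) * f X) /
          ((p - 1) * X * Z X ^ (p - 1))) X)
    (hZlim : Tendsto Z (nhdsWithin 0 (Ioi 0)) (nhds 0))
    (hZratio : Tendsto (fun X => Z X / X ^ (γ / (p - 1))) (nhdsWithin 0 (Ioi 0))
      (nhds L)) :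
    L = m * deriv f 0 / c ∧ False := by
  by_cases hdiff : DifferentiableAt ℝ f 0
  swap
  · rw [deriv_zero_of_not_differentiableAt hdiff] at hf'0
    exact absurd hf'0 (lt_irrefl 0)
  exfalso
  set α := γ / (p - 1) with hα
  have hp1 : (0:ℝ) < p - 1 := by linarith
  have hp0 : (0:ℝ) < p := by linarith
  have hαpos : 0 < α := div_pos hγpos hp1
  have hαγ : α * (p - 1) = γ := div_mul_cancel₀ _ (ne_of_gt hp1)
  set l := nhdsWithin (0:ℝ) (Ioi 0) with hl
  have hmem : Ioo (0:ℝ) δ ∈ l := Ioo_mem_nhdsGT_of_mem ⟨le_refl 0, hδ⟩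
  set N : ℝ → ℝ := fun X => c * Z X - Z X ^ p - m * X ^ (α - 1) * f X with hN
  -- f X / X → f'(0)
  have hfl : Tendsto (fun X => f X / X) l (nhds (deriv f 0)) := by
    have h1 := hdiff.hasDerivAt
    rw [hasDerivAt_iff_tendsto_slope] at h1
    have h2 : Tendsto (slope f 0) l (nhds (deriv f 0)) :=
      h1.mono_left (nhdsWithin_mono 0 (fun x hx => ne_of_gt hx))
    refine h2.congr fun X => ?_
    simp [slope_def_field, hf0]
  -- L ≥ 0
  have hL0 : 0 ≤ L := by
    refine ge_of_tendsto hZratio (Filter.mem_of_superset hmem fun X hX => ?_)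
    exact le_of_lt (div_pos (hZpos X hX) (rpow_pos_of_pos hX.1 α))
  -- basic limits
  have hid : Tendsto (fun X : ℝ => X) l (nhds 0) :=
    tendsto_id.mono_right nhdsWithin_le_nhds
  have hXγ : Tendsto (fun X : ℝ => X ^ γ) l (nhds 0) := by
    have := ((Real.continuousAt_rpow_const 0 γ (Or.inr hγpos.le)).tendsto).comp hid
    simpa [Real.zero_rpow hγpos.ne', Function.comp_def] using this
  have hXα : Tendsto (fun X : ℝ => X ^ α) l (nhds 0) := by
    have := ((Real.continuousAt_rpow_const 0 α (Or.inr hαpos.le)).tendsto).comp hid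
    simpa [Real.zero_rpow hαpos.ne', Function.comp_def] using this
  have hZp : Tendsto (fun X => Z X ^ p) l (nhds 0) := by
    have := ((Real.continuousAt_rpow_const 0 p (Or.inr hp0.le)).tendsto).comp hZlim
    simpa [Real.zero_rpow hp0.ne', Function.comp_def] using this
  have hratioP : Tendsto (fun X => (Z X / X ^ α) ^ p) l (nhds (L ^ p)) :=
    ((Real.continuousAt_rpow_const L p (Or.inr hp0.le)).tendsto).comp hZratio
  -- Z X ^ p / X ^ α → 0
  have hZpα : Tendsto (fun X => Z X ^ p / X ^ α) l (nhds 0) := by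
    have h1 := hratioP.mul hXγ
    rw [mul_zero] at h1
    refine h1.congr' (Filter.mem_of_superset hmem fun X hX => ?_)
    have hX0 : (0:ℝ) < X := hX.1
    have hZ0 : 0 < Z X := hZpos X hX
    have hXαp : (0:ℝ) < X ^ α := rpow_pos_of_pos hX0 α
    have e1 : (Z X / X ^ α) ^ p = Z X ^ p / X ^ (α * p) := by
      rw [Real.div_rpow hZ0.le hXαp.le, ← Real.rpow_mul hX0.le]
    have e2 : X ^ (α * p) = X ^ γ * X ^ α := by
      rw [← Real.rpow_add hX0, ← hαγ]; ring_nf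
    show (Z X / X ^ α) ^ p * X ^ γ = Z X ^ p / X ^ α
    rw [e1, e2]
    have hXγp : (0:ℝ) < X ^ γ := rpow_pos_of_pos hX0 γ
    field_simp
  -- numerator asymptotics
  have hNum : Tendsto (fun X => N X / X ^ α) l (nhds (c * L - 0 - m * deriv f 0)) := by
    have h1 := ((hZratio.const_mul c).sub hZpα).sub (hfl.const_mul m)
    refine h1.congr' (Filter.mem_of_superset hmem fun X hX => ?_)
    have hX0 : (0:ℝ) < X := hX.1
    have hXαp : (0:ℝ) < X ^ α := rpow_pos_of_pos hX0 α
    show c * (Z X / X ^ α) - Z X ^ p / X ^ α - m * (f X / X) = N X / X ^ α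
    have e1 : X ^ (α - 1) = X ^ α / X := by rw [Real.rpow_sub hX0, Real.rpow_one]
    rw [hN]
    simp only []
    rw [e1]
    field_simp
  set A := c * L - 0 - m * deriv f 0 with hA
  have hApos : 0 < A := by
    have : 0 ≤ c * L := mul_nonneg hc.le hL0
    have : m * deriv f 0 < 0 := mul_neg_of_pos_of_neg hm hf'0
    rw [hA]; linarith [mul_nonneg hc.le hL0]
  have hev : ∀ᶠ X in l, A / 2 ≤ N X / X ^ α :=
    hNum.eventually (eventually_ge_nhds (by linarith))
  -- extract an interval (0, X1)
  obtain ⟨X1, hX1pos, hX1sub⟩ :=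
    mem_nhdsGT_iff_exists_Ioo_subset.mp
      ((hev.and (Filter.eventually_of_mem hmem fun x hx => hx)) :
        ∀ᶠ X in l, A / 2 ≤ N X / X ^ α ∧ X ∈ Ioo 0 δ)
  set K := A * p / (2 * (p - 1) * α) with hK
  have hKpos : 0 < K := by
    apply div_pos (mul_pos hApos hp0)
    positivity
  set F : ℝ → ℝ := fun X => Z X ^ p - K * X ^ α with hF
  -- derivative of F on (0, X1)
  have hdF : ∀ X ∈ Ioo (0:ℝ) X1,
      HasDerivAt F (p * N X / ((p - 1) * X) - K * (α * X ^ (α - 1))) X := by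
    intro X hX
    obtain ⟨hge, hXδ⟩ := hX1sub hX
    have hX0 : (0:ℝ) < X := hXδ.1
    have hZ0 : 0 < Z X := hZpos X hXδ
    have hZp1 : (0:ℝ) < Z X ^ (p - 1) := rpow_pos_of_pos hZ0 _
    have h1 := ((hZode X hXδ).rpow_const (p := p) (Or.inl hZ0.ne')).sub
      ((Real.hasDerivAt_rpow_const (p := α) (Or.inl hX0.ne')).const_mul K)
    have e1 : N X / ((p - 1) * X * Z X ^ (p - 1)) * p * Z X ^ (p - 1)
        = p * N X / ((p - 1) * X) := by
      field_simp
    rw [e1] at h1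
    exact h1
  have hderiv_nonneg : ∀ X ∈ Ioo (0:ℝ) X1,
      0 ≤ p * N X / ((p - 1) * X) - K * (α * X ^ (α - 1)) := by
    intro X hX
    obtain ⟨hge, hXδ⟩ := hX1sub hX
    have hX0 : (0:ℝ) < X := hXδ.1
    have hXαp : (0:ℝ) < X ^ α := rpow_pos_of_pos hX0 α
    have hNge : A / 2 * X ^ α ≤ N X := (le_div_iff₀ hXαp).mp hge
    rw [sub_nonneg, Real.rpow_sub hX0, Real.rpow_one]
    calc K * (α * (X ^ α / X)) = p * (A / 2 * X ^ α) / ((p - 1) * X) := by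
          rw [hK]; field_simp
      _ ≤ p * N X / ((p - 1) * X) := by gcongr
  -- monotonicity of F
  have hmono : MonotoneOn F (Ioo 0 X1) := by
    apply monotoneOn_of_deriv_nonneg (convex_Ioo _ _)
    · exact fun X hX => (hdF X hX).continuousAt.continuousWithinAt
    · rw [isOpen_Ioo.interior_eq]
      exact fun X hX => (hdF X hX).differentiableAt.differentiableWithinAt
    · rw [isOpen_Ioo.interior_eq]
      intro X hX
      rw [(hdF X hX).deriv]
      exact hderiv_nonneg X hX
  -- F → 0 at 0⁺
  have hFlim : Tendsto F l (nhds 0) := by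
    have := hZp.sub (hXα.const_mul K)
    simpa using this
  -- conclude K * X0^α ≤ Z X0 ^ p on (0, X1)
  have hineq : ∀ X0 ∈ Ioo (0:ℝ) X1, K * X0 ^ α ≤ Z X0 ^ p := by
    intro X0 hX0
    have hevle : ∀ᶠ X in l, F X ≤ F X0 := by
      refine Filter.mem_of_superset
        (Ioo_mem_nhdsGT_of_mem ⟨le_refl (0:ℝ), hX0.1⟩) fun X hX => ?_
      exact hmono ⟨hX.1, hX.2.trans hX0.2⟩ hX0 hX.2.le
    have h0 : (0:ℝ) ≤ F X0 := le_of_tendsto hFlim hevle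
    rw [hF] at h0
    simpa [sub_nonneg] using h0
  -- contradiction
  have hevK : ∀ᶠ X in l, K ≤ Z X ^ p / X ^ α := by
    refine Filter.mem_of_superset
      (Ioo_mem_nhdsGT_of_mem ⟨le_refl (0:ℝ), hX1pos⟩) fun X hX => ?_
    have hXαp : (0:ℝ) < X ^ α := rpow_pos_of_pos hX.1 α
    show K ≤ Z X ^ p / X ^ α
    rw [le_div_iff₀ hXαp]
    exact hineq X hX
  have : K ≤ 0 := ge_of_tendsto hZpα hevK
  linarith
end
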